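/- arXiv:2404.13616 — 3 statements merged into one kernel-verified Lean document; each statement's English description precedes it below -/
import Mathlib

section
/- Let X₁, ..., X_N be measurable spaces with probability measures μ₁, ..., μ_N. For λ ∈ Π(μ₁,...,μ_N), write λⱼ for the pushforward of λ under the projection onto X₁ × ... × Xⱼ. Suppose λ is an extreme point of Π(λ_{N-1}, μ_N) and, for each j = 3, ..., N-1, λⱼ is an extreme point of Π(λ_{j-1}, μⱼ), and λ₂ is an extreme point of Π(μ₁, μ₂). Then λ is an extreme point of Π(μ₁, ..., μ_N). -/
open MeasureTheory

/-- Partial product of the first `j` factors of a family indexed by `Fin N`. -/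
def PartialProd {N : ℕ} (X : Fin N → Type*) (j : ℕ) : Type _ :=
  ∀ i : {i : Fin N // (i : ℕ) < j}, X i.1

instance {N : ℕ} (X : Fin N → Type*) [∀ i, MeasurableSpace (X i)] (j : ℕ) :
    MeasurableSpace (PartialProd X j) := by
  unfold PartialProd; infer_instance

/-- Projection between partial products. -/
def pproj {N : ℕ} (X : Fin N → Type*) {j k : ℕ} (h : j ≤ k) :
    PartialProd X k → PartialProd X j :=
  fun ω i => ω ⟨i.1, lt_of_lt_of_le i.2 h⟩

/-- The set `Π(μ₁,…,μ_N)` of couplings with all `N` prescribed marginals. -/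
def CouplingsN {N : ℕ} (X : Fin N → Type*) [∀ i, MeasurableSpace (X i)]
    (μ : ∀ i, Measure (X i)) : Set (Measure (PartialProd X N)) :=
  {lam | IsProbabilityMeasure lam ∧
    ∀ i : Fin N, lam.map (fun ω => ω ⟨i, i.isLt⟩) = μ i}

/-- The set `Π(ρ, ν)` of measures on the `j`-fold partial product whose projection
to the first `j-1` coordinates is `ρ` and whose `j`-th marginal is `ν`. -/
def CouplingsStep {N : ℕ} (X : Fin N → Type*) [∀ i, MeasurableSpace (X i)] (j : ℕ)
    (ρ : Measure (PartialProd X (j - 1))) {i₀ : Fin N} (ν : Measure (X i₀))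
    (hi : (i₀ : ℕ) < j) : Set (Measure (PartialProd X j)) :=
  {τ | IsProbabilityMeasure τ ∧ τ.map (pproj X (Nat.sub_le j 1)) = ρ ∧
    τ.map (fun ω => ω ⟨i₀, hi⟩) = ν}

/-- `m` is an extreme point of `C`: any representation as a midpoint of elements of `C`
is trivial. -/
def IsExtremePt {α : Type*} [MeasurableSpace α] (C : Set (Measure α)) (m : Measure α) : Prop :=
  m ∈ C ∧ ∀ η ∈ C, ∀ ζ ∈ C,
    m = (2 : ENNReal)⁻¹ • η + (2 : ENNReal)⁻¹ • ζ → η = m ∧ ζ = m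


lemma measurable_pproj {N : ℕ} (X : Fin N → Type*) [∀ i, MeasurableSpace (X i)]
    {j k : ℕ} (h : j ≤ k) : Measurable (pproj X h) :=
  measurable_pi_lambda _ fun _ => measurable_pi_apply _

lemma measurable_eval {N : ℕ} (X : Fin N → Type*) [∀ i, MeasurableSpace (X i)]
    {j : ℕ} (i : {i : Fin N // (i : ℕ) < j}) :
    Measurable (fun ω : PartialProd X j => ω i) :=
  measurable_pi_apply _

lemma map_pproj_pproj {N : ℕ} {X : Fin N → Type*} [∀ i, MeasurableSpace (X i)]
    (η : Measure (PartialProd X N)) {j k : ℕ} (h1 : j ≤ k) (h2 : k ≤ N) :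
    (η.map (pproj X h2)).map (pproj X h1) = η.map (pproj X (h1.trans h2)) := by
  rw [Measure.map_map (measurable_pproj X h1) (measurable_pproj X h2)]
  rfl

lemma marg_of_map {N : ℕ} {X : Fin N → Type*} [∀ i, MeasurableSpace (X i)]
    {μ : ∀ i, Measure (X i)} {η : Measure (PartialProd X N)}
    (hη : ∀ i : Fin N, η.map (fun ω => ω ⟨i, i.isLt⟩) = μ i)
    {j : ℕ} (h : j ≤ N) (i₀ : Fin N) (hi : (i₀ : ℕ) < j) :
    (η.map (pproj X h)).map (fun ω => ω ⟨i₀, hi⟩) = μ i₀ := by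
  rw [Measure.map_map (measurable_eval X _) (measurable_pproj X h)]
  exact hη i₀

lemma map_half_add {α β : Type*} [MeasurableSpace α] [MeasurableSpace β]
    (η ζ : Measure α) {f : α → β} (hf : Measurable f) :
    ((2:ENNReal)⁻¹ • η + (2:ENNReal)⁻¹ • ζ).map f
      = (2:ENNReal)⁻¹ • η.map f + (2:ENNReal)⁻¹ • ζ.map f := by
  rw [Measure.map_add _ _ hf, Measure.map_smul, Measure.map_smul]

theorem stmt4 {N : ℕ} (hN : 2 ≤ N) (X : Fin N → Type*) [∀ i, MeasurableSpace (X i)]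
    (μ : ∀ i, Measure (X i)) [∀ i, IsProbabilityMeasure (μ i)]
    (lam : Measure (PartialProd X N)) (hlam : lam ∈ CouplingsN X μ)
    (htop : IsExtremePt
      (CouplingsStep X N (lam.map (pproj X (Nat.sub_le N 1))) (μ ⟨N - 1, by omega⟩)
        (by simp; omega)) lam)
    (hmid : ∀ j (h3 : 3 ≤ j) (hj : j ≤ N - 1),
      IsExtremePt
        (CouplingsStep X j (lam.map (pproj X (show j - 1 ≤ N by omega)))
          (μ ⟨j - 1, by omega⟩) (by simp; omega))
        (lam.map (pproj X (show j ≤ N by omega))))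
    (h2 : IsExtremePt
      {τ : Measure (PartialProd X 2) | IsProbabilityMeasure τ ∧
        τ.map (fun ω => ω ⟨⟨0, by omega⟩, by norm_num⟩) = μ ⟨0, by omega⟩ ∧
        τ.map (fun ω => ω ⟨⟨1, by omega⟩, by norm_num⟩) = μ ⟨1, by omega⟩}
      (lam.map (pproj X hN))) :
    IsExtremePt (CouplingsN X μ) lam := by
  refine ⟨hlam, ?_⟩
  rintro η ⟨hηP, hηM⟩ ζ ⟨hζP, hζM⟩ hsplit
  -- the split pushes forward to every partial product
  have hsplitmap : ∀ {j : ℕ} (h : j ≤ N),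
      lam.map (pproj X h) = (2:ENNReal)⁻¹ • η.map (pproj X h)
        + (2:ENNReal)⁻¹ • ζ.map (pproj X h) := by
    intro j h
    rw [hsplit, map_half_add _ _ (measurable_pproj X h)]
  have probmap : ∀ (τ : Measure (PartialProd X N)) [IsProbabilityMeasure τ] (j : ℕ)
      (h : j ≤ N), IsProbabilityMeasure (τ.map (pproj X h)) := fun τ _ j h =>
    Measure.isProbabilityMeasure_map (measurable_pproj X h).aemeasurable
  -- base case: projections to level 2 agree
  have base : η.map (pproj X hN) = lam.map (pproj X hN)
      ∧ ζ.map (pproj X hN) = lam.map (pproj X hN) := by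
    refine h2.2 _ ⟨probmap η 2 hN, marg_of_map hηM hN _ (by norm_num),
        marg_of_map hηM hN _ (by norm_num)⟩
      _ ⟨probmap ζ 2 hN, marg_of_map hζM hN _ (by norm_num),
        marg_of_map hζM hN _ (by norm_num)⟩ (hsplitmap hN)
  -- induction up to level N - 1
  have step : ∀ j, 2 ≤ j → j ≤ N - 1 → ∀ h : j ≤ N,
      η.map (pproj X h) = lam.map (pproj X h)
        ∧ ζ.map (pproj X h) = lam.map (pproj X h) := by
    intro j h2j
    induction j, h2j using Nat.le_induction with
    | base => intro _ h; exact base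
    | succ j hj ih =>
      intro hj1 h
      have hjN : j ≤ N := by omega
      have hjN1 : j ≤ N - 1 := by omega
      obtain ⟨ihη, ihζ⟩ := ih hjN1 hjN
      have hm := hmid (j + 1) (by omega) hj1
      refine hm.2 _ ⟨probmap η (j+1) h, ?_, marg_of_map hηM h _ (by simp)⟩
        _ ⟨probmap ζ (j+1) h, ?_, marg_of_map hζM h _ (by simp)⟩ (hsplitmap h)
      · rw [map_pproj_pproj η (Nat.sub_le (j+1) 1) h]; exact ihη
      · rw [map_pproj_pproj ζ (Nat.sub_le (j+1) 1) h]; exact ihζ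
  -- final step
  rcases eq_or_lt_of_le hN with hN2 | hN3
  · -- N = 2 : pproj X hN is the identity
    subst hN2
    have hid : pproj X hN = id := rfl
    have h1 : η.map (pproj X hN) = η := by rw [hid, Measure.map_id]
    have h2' : ζ.map (pproj X hN) = ζ := by rw [hid, Measure.map_id]
    have h3 : lam.map (pproj X hN) = lam := by rw [hid, Measure.map_id]
    exact ⟨by rw [← h1, base.1, h3], by rw [← h2', base.2, h3]⟩
  · -- N ≥ 3 : use htop with the step result at N - 1
    have hstep := step (N - 1) (by omega) le_rfl (Nat.sub_le N 1)
    refine htop.2 _ ⟨hηP, ?_, ?_⟩ _ ⟨hζP, ?_, ?_⟩ hsplit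
    · exact hstep.1
    · exact hηM ⟨N - 1, by omega⟩
    · exact hstep.2
    · exact hζM ⟨N - 1, by omega⟩
end

section
/- Let X, Y ⊆ ℝ^{n+1} be compact sets, c : X × Y → ℝ continuous, and suppose there is a point x̄ ∈ X with c(x̄, y) = 0 for all y ∈ Y. Suppose c satisfies the sub-twist condition: for distinct y₁, y₂ ∈ Y, the function x ↦ c(x,y₁) - c(x,y₂) has no critical points other than one global minimum and one global maximum. Let S ⊆ X × Y be c-cyclically monotone, x₁ ∈ X with (x₁,y₁), (x₁,y*) ∈ S, y₁ ≠ y*, c(x₁,y₁) > c(x₁,y*), and suppose x₁ is a global minimum of x ↦ c(x,y*) - c(x,y₁). Then for any x₂ ≠ x₁, (x₂, y*) ∉ S. -/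
theorem stmt9 {n : ℕ}
    (X Y : Set (EuclideanSpace ℝ (Fin (n + 1)))) (hX : IsCompact X) (hY : IsCompact Y)
    (c : EuclideanSpace ℝ (Fin (n + 1)) → EuclideanSpace ℝ (Fin (n + 1)) → ℝ)
    (hc : Continuous fun p : EuclideanSpace ℝ (Fin (n + 1)) × EuclideanSpace ℝ (Fin (n + 1)) =>
      c p.1 p.2)
    (xbar : EuclideanSpace ℝ (Fin (n + 1))) (hxbar : xbar ∈ X)
    (hczero : ∀ y ∈ Y, c xbar y = 0)
    -- sub-twist condition: for distinct targets, the difference function has exactly one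
    -- global minimum point and exactly one global maximum point on `X`
    (hsubtwist : ∀ y₁ ∈ Y, ∀ y₂ ∈ Y, y₁ ≠ y₂ →
      (∃! xm, xm ∈ X ∧ ∀ x ∈ X, c xm y₁ - c xm y₂ ≤ c x y₁ - c x y₂) ∧
      (∃! xM, xM ∈ X ∧ ∀ x ∈ X, c x y₁ - c x y₂ ≤ c xM y₁ - c xM y₂))
    (S : Set (EuclideanSpace ℝ (Fin (n + 1)) × EuclideanSpace ℝ (Fin (n + 1))))
    (hSsub : S ⊆ X ×ˢ Y)
    -- c-cyclical monotonicity of S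
    (hmono : ∀ (m : ℕ) (p : Fin m → EuclideanSpace ℝ (Fin (n + 1)) × EuclideanSpace ℝ (Fin (n + 1))),
      (∀ k, p k ∈ S) → ∀ σ : Equiv.Perm (Fin m),
        ∑ k, c (p k).1 (p k).2 ≤ ∑ k, c (p k).1 (p (σ k)).2)
    (x₁ y₁ ystar : EuclideanSpace ℝ (Fin (n + 1)))
    (hx₁ : x₁ ∈ X) (hy₁ : y₁ ∈ Y) (hystar : ystar ∈ Y) (hne : y₁ ≠ ystar)
    (hS1 : (x₁, y₁) ∈ S) (hS2 : (x₁, ystar) ∈ S)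
    (hgt : c x₁ ystar < c x₁ y₁)
    (hmin : ∀ x ∈ X, c x₁ ystar - c x₁ y₁ ≤ c x ystar - c x y₁) :
    ∀ x₂ ∈ X, x₂ ≠ x₁ → (x₂, ystar) ∉ S := by
  intro x₂ hx₂ hx₂ne hmem
  -- strict minimality of x₁ at x₂
  obtain ⟨⟨xm, _, hxmuniq⟩, -⟩ := hsubtwist ystar hystar y₁ hy₁ hne.symm
  have hx₁m : x₁ = xm := hxmuniq x₁ ⟨hx₁, hmin⟩
  have hstrict : c x₁ ystar - c x₁ y₁ < c x₂ ystar - c x₂ y₁ := by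
    rcases lt_or_eq_of_le (hmin x₂ hx₂) with h | h
    · exact h
    · exfalso
      apply hx₂ne
      have hx₂m : x₂ = xm := hxmuniq x₂ ⟨hx₂, fun x hx => h ▸ hmin x hx⟩
      rw [hx₂m, hx₁m]
  -- apply cyclical monotonicity with m = 2 and the swap permutation
  have := hmono 2 ![(x₁, y₁), (x₂, ystar)]
    (by intro k; fin_cases k <;> simpa using ‹_›) (Equiv.swap 0 1)
  simp [Fin.sum_univ_two, Equiv.swap_apply_left, Equiv.swap_apply_right] at this
  linarith
end

section
/- Let X₁, ..., X_N be compact metric spaces with Borel probability measures μ₁, ..., μ_N, let c : ∏ᵢ Xᵢ → ℝ be continuous, and let φᵢ : Xᵢ → ℝ be continuous with ∑ᵢ φᵢ(xᵢ) ≤ c(x₁,...,x_N) for all points. For 2 ≤ j ≤ N-1 define c_j(x₁,...,x_j) = inf{c(x₁,...,x_N) - ∑_{i=j+1}^N φᵢ(xᵢ) : (x_{j+1},...,x_N) ∈ ∏_{i>j} Xᵢ}. Let S = {c = ∑φᵢ} and S_j = {c_j = ∑_{i≤j} φᵢ}. Then the projection of S onto X₁ × ... × X_j equals S_j. -/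
/-!
Write `F ω = c ω - ∑_{i ≥ j} φᵢ(ωᵢ)` and `G u = ∑_{i < j} φᵢ(uᵢ)`, so that `c_j u` is the infimum of
`F` over the fiber of the projection above `u`, the constraint says `G ∘ proj ≤ F`, and `S` is the
set where `F = G ∘ proj`. Thus `u` lies in `S_j` iff the infimum of `F` over its fiber equals the lower
bound `G u`; as the fiber is compact and nonempty, that infimum is a minimum, attained at a point of
`S` above `u`.
-/

open MeasureTheory

instance {N : ℕ} (X : Fin N → Type*) [∀ i, TopologicalSpace (X i)] (j : ℕ) :
    TopologicalSpace (PartialProd X j) := by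
  unfold PartialProd; infer_instance

section FibreInfimum

variable {Ω U α : Type*} (p : Ω → U) (F : Ω → α)

theorem image_setOf_eq_comp_eq_setOf_sInf_fiber_eq [ConditionallyCompleteLattice α] (G : U → α)
    (hle : ∀ ω, G (p ω) ≤ F ω) (hmin : ∀ u, ∃ a, IsLeast {r | ∃ ω, p ω = u ∧ r = F ω} a) :
    p '' {ω | F ω = G (p ω)} = {u | sInf {r | ∃ ω, p ω = u ∧ r = F ω} = G u} := by
  ext u
  obtain ⟨a, ha⟩ := hmin u
  obtain ⟨ω₀, hω₀u, rfl⟩ := ha.1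
  simp only [Set.mem_image, Set.mem_ofPred_eq, ha.csInf_eq]
  constructor
  · rintro ⟨ω, hω, rfl⟩
    exact le_antisymm (hω ▸ ha.2 ⟨ω, rfl, rfl⟩) (hω₀u ▸ hle ω₀)
  · intro h
    exact ⟨ω₀, hω₀u ▸ h, hω₀u⟩

theorem exists_isLeast_fiber [LinearOrder α] [TopologicalSpace α] [OrderClosedTopology α]
    [TopologicalSpace Ω] [CompactSpace Ω] [TopologicalSpace U] [T1Space U]
    (hp : Continuous p) (hsurj : Function.Surjective p) (hF : Continuous F) (u : U) :
    ∃ a, IsLeast {r | ∃ ω, p ω = u ∧ r = F ω} a := by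
  obtain ⟨ω₀, hω₀⟩ := hsurj u
  have hfiber : IsCompact (p ⁻¹' {u}) := (isClosed_singleton.preimage hp).isCompact
  obtain ⟨ω₁, hω₁, hmin⟩ := hfiber.exists_isMinOn ⟨ω₀, hω₀⟩ hF.continuousOn
  exact ⟨F ω₁, ⟨ω₁, hω₁, rfl⟩, by rintro _ ⟨ω, hω, rfl⟩; exact hmin hω⟩

end FibreInfimum

namespace PartialProd

variable {N : ℕ} (X : Fin N → Type*)

instance [∀ i, TopologicalSpace (X i)] [∀ i, CompactSpace (X i)] (j : ℕ) :
    CompactSpace (PartialProd X j) := by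
  unfold PartialProd; infer_instance

instance [∀ i, TopologicalSpace (X i)] [∀ i, T1Space (X i)] (j : ℕ) :
    T1Space (PartialProd X j) := by
  unfold PartialProd; infer_instance

theorem continuous_pproj [∀ i, TopologicalSpace (X i)] {j k : ℕ} (h : j ≤ k) :
    Continuous (pproj X h) :=
  continuous_pi fun _ => continuous_apply (A := fun i : {i : Fin N // (i : ℕ) < k} => X i.1) _

theorem continuous_eval [∀ i, TopologicalSpace (X i)] (i : Fin N) :
    Continuous fun ω : PartialProd X N => ω ⟨i, i.isLt⟩ :=
  continuous_apply (A := fun i : {i : Fin N // (i : ℕ) < N} => X i.1) _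

theorem pproj_surjective [∀ i, Nonempty (X i)] {j : ℕ} (h : j ≤ N) :
    Function.Surjective (pproj X h) := by
  classical
  intro u
  refine ⟨fun i => if hi : (i.1 : ℕ) < j then u ⟨i.1, hi⟩ else Classical.arbitrary _, ?_⟩
  funext i
  simp [pproj, i.2]

theorem sum_eq_sum_pproj_add_sum {M : Type*} [AddCommMonoid M] (f : ∀ i, X i → M) {j : ℕ}
    (h : j ≤ N) (ω : PartialProd X N) :
    ∑ i : Fin N, f i (ω ⟨i, i.isLt⟩) =
      ∑ i : {i : Fin N // (i : ℕ) < j}, f i.1 (pproj X h ω i) +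
        ∑ i : {i : Fin N // j ≤ (i : ℕ)}, f i.1 (ω ⟨i.1, i.1.isLt⟩) := by
  rw [← Fintype.sum_subtype_add_sum_subtype (fun i : Fin N => (i : ℕ) < j)]
  congr 1
  exact Fintype.sum_equiv (Equiv.subtypeEquivRight fun _ => not_lt) _ _ fun i => rfl

end PartialProd

theorem stmt15_general {N : ℕ} (X : Fin N → Type*) [∀ i, MetricSpace (X i)]
    [∀ i, CompactSpace (X i)] [∀ i, MeasurableSpace (X i)]
    (μ : ∀ i, Measure (X i)) [∀ i, IsProbabilityMeasure (μ i)]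
    (c : PartialProd X N → ℝ) (hc : Continuous c)
    (φ : ∀ i : Fin N, X i → ℝ) (hφ : ∀ i, Continuous (φ i))
    (hle : ∀ ω : PartialProd X N, ∑ i : Fin N, φ i (ω ⟨i, i.isLt⟩) ≤ c ω)
    (j : ℕ)
    (hjN' : j ≤ N)
    (cj : PartialProd X j → ℝ)
    (hcj : cj = fun u => sInf {r : ℝ | ∃ ω : PartialProd X N, pproj X hjN' ω = u ∧
      r = c ω - ∑ i : {i : Fin N // j ≤ (i : ℕ)}, φ i.1 (ω ⟨i.1, i.1.isLt⟩)})
    (S : Set (PartialProd X N))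
    (hS : S = {ω | c ω = ∑ i : Fin N, φ i (ω ⟨i, i.isLt⟩)})
    (Sj : Set (PartialProd X j))
    (hSj : Sj = {u | cj u = ∑ i : {i : Fin N // (i : ℕ) < j}, φ i.1 (u i)}) :
    pproj X hjN' '' S = Sj := by
  have : ∀ i, Nonempty (X i) := fun i => (μ i).nonempty_of_neZero
  set F : PartialProd X N → ℝ :=
    fun ω => c ω - ∑ i : {i : Fin N // j ≤ (i : ℕ)}, φ i.1 (ω ⟨i.1, i.1.isLt⟩)
  have hsplit := PartialProd.sum_eq_sum_pproj_add_sum X φ hjN'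
  have hF : Continuous F := hc.sub <| continuous_finsetSum _ fun i _ =>
    (hφ i.1).comp (PartialProd.continuous_eval X i.1)
  set G : PartialProd X j → ℝ := fun u => ∑ i : {i : Fin N // (i : ℕ) < j}, φ i.1 (u i)
  have hS' : S = {ω | F ω = G (pproj X hjN' ω)} := by
    ext ω
    simp only [hS, Set.mem_ofPred_eq, F, G, hsplit ω]
    constructor <;> intro h <;> linarith
  subst hcj hSj
  rw [hS']
  refine image_setOf_eq_comp_eq_setOf_sInf_fiber_eq _ F G (fun ω => ?_) ?_
  · have := hle ω
    rw [hsplit ω] at this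
    simp only [F, G]
    linarith
  · exact exists_isLeast_fiber _ F (PartialProd.continuous_pproj X hjN')
      (PartialProd.pproj_surjective X hjN') hF

theorem stmt15 {N : ℕ} (X : Fin N → Type*) [∀ i, MetricSpace (X i)]
    [∀ i, CompactSpace (X i)] [∀ i, MeasurableSpace (X i)] [∀ i, BorelSpace (X i)]
    (μ : ∀ i, Measure (X i)) [∀ i, IsProbabilityMeasure (μ i)]
    (c : PartialProd X N → ℝ) (hc : Continuous c)
    (φ : ∀ i : Fin N, X i → ℝ) (hφ : ∀ i, Continuous (φ i))
    (hle : ∀ ω : PartialProd X N, ∑ i : Fin N, φ i (ω ⟨i, i.isLt⟩) ≤ c ω)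
    (j : ℕ) (hj2 : 2 ≤ j) (hjN : j ≤ N - 1)
    (hjN' : j ≤ N)
    (cj : PartialProd X j → ℝ)
    (hcj : cj = fun u => sInf {r : ℝ | ∃ ω : PartialProd X N, pproj X hjN' ω = u ∧
      r = c ω - ∑ i : {i : Fin N // j ≤ (i : ℕ)}, φ i.1 (ω ⟨i.1, i.1.isLt⟩)})
    (S : Set (PartialProd X N))
    (hS : S = {ω | c ω = ∑ i : Fin N, φ i (ω ⟨i, i.isLt⟩)})
    (Sj : Set (PartialProd X j))
    (hSj : Sj = {u | cj u = ∑ i : {i : Fin N // (i : ℕ) < j}, φ i.1 (u i)}) :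
    pproj X hjN' '' S = Sj :=
  stmt15_general X μ c hc φ hφ hle j hjN' cj hcj S hS Sj hSj
end
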